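/- Let C and D be crumpled n-cubes with wild sets W_C and W_D respectively, and let h : Bd C → Bd D be a homeomorphism with W_D ⊆ h(W_C). Set X = h⁻¹(W_D), and let (C_X, h_X) be a standard flattening of C relative to X. Then (C,D,h) ∈ W_n if and only if (C_X, D, h ∘ h_X⁻¹) ∈ W_n. (Theorem 5.1) -/

import Mathlib

noncomputable section

open Metric Set unitInterval

/-- The ambient Euclidean space `ℝ^{n+1}` in which the sphere `S^n` lives. -/
abbrev Amb (n : ℕ) := EuclideanSpace ℝ (Fin (n + 1))

/-- The unit sphere `S^n` inside `ℝ^{n+1}`. -/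
def Sph (n : ℕ) : Set (Amb n) := Metric.sphere 0 1

/-- A crumpled `n`-cube: the union of the image `bd` of a topological embedding of the
sphere `S^{n-1}` into `S^n` together with one of the connected components `int` of
`S^n \ bd`. -/
structure CrumpledCube (n : ℕ) where
  bd : Set (Amb n)
  int : Set (Amb n)
  bd_subset_sphere : bd ⊆ Sph n
  exists_embedding : ∃ e : ↥(Sph (n - 1)) → Amb n,
      Continuous e ∧ Function.Injective e ∧ Set.range e = bd
  int_component : ∃ x, x ∈ Sph n \ bd ∧ int = connectedComponentIn (Sph n \ bd) x

namespace CrumpledCube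

/-- The underlying set of a crumpled cube. -/
def carrier {n : ℕ} (C : CrumpledCube n) : Set (Amb n) := C.bd ∪ C.int

lemma bd_subset_carrier {n : ℕ} (C : CrumpledCube n) : C.bd ⊆ C.carrier :=
  Set.subset_union_left

end CrumpledCube

/-- `f : C → D` is a map associated with the triple `(C, D, h)`: it is continuous,
restricts to `h` on `Bd C`, and satisfies `f⁻¹(Bd D) = Bd C`. -/
def IsAssociatedMap {n : ℕ} (C D : CrumpledCube n) (h : ↥C.bd ≃ₜ ↥D.bd)
    (f : ↥C.carrier → ↥D.carrier) : Prop :=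
  Continuous f ∧
    (∀ (x : ↥C.carrier) (hx : (x : Amb n) ∈ C.bd),
      ((f x : ↥D.carrier) : Amb n) = ((h ⟨(x : Amb n), hx⟩ : ↥D.bd) : Amb n)) ∧
    (∀ x : ↥C.carrier, ((f x : ↥D.carrier) : Amb n) ∈ D.bd ↔ (x : Amb n) ∈ C.bd)

/-- The triple `(C, D, h)` belongs to the collection `𝒲_n`. -/
def MemW {n : ℕ} (C D : CrumpledCube n) (h : ↥C.bd ≃ₜ ↥D.bd) : Prop :=
  ∃ f : ↥C.carrier → ↥D.carrier, IsAssociatedMap C D h f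

/-- The image `h(T)` of a subset `T` of `Bd C` under a boundary homeomorphism
`h : Bd C → Bd D`, as a subset of the ambient space. -/
def bdImage {n : ℕ} {C D : CrumpledCube n} (h : ↥C.bd ≃ₜ ↥D.bd) (T : Set (Amb n)) :
    Set (Amb n) :=
  (fun x : ↥C.bd => ((h x : ↥D.bd) : Amb n)) '' {x : ↥C.bd | (x : Amb n) ∈ T}

/-- `T` is a homotopy taming set for the crumpled cube `C`. -/
def IsHomotopyTamingSet {n : ℕ} (C : CrumpledCube n) (T : Set (Amb n)) : Prop :=
  T ⊆ C.bd ∧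
    ∀ (m : C(I × I, ↥C.carrier)) (ε : ℝ), 0 < ε →
      ∃ m' : C(I × I, ↥C.carrier),
        (∀ x, dist (m x) (m' x) < ε) ∧ ∀ x, ((m' x : ↥C.carrier) : Amb n) ∈ T ∪ C.int

/-- `Bd C` is locally collared in `C` at the point `p`. -/
def LocallyCollaredAt {n : ℕ} (C : CrumpledCube n) (p : ↥C.carrier) : Prop :=
  ∃ N : Set ↥C.carrier, IsOpen N ∧ p ∈ N ∧
    ∃ φ : ↥N ≃ₜ ↥(N ∩ {x : ↥C.carrier | (x : Amb n) ∈ C.bd}) × ↥(Set.Ico (0 : ℝ) 1),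
      ∀ (x : ↥N) (hx : ((x : ↥C.carrier) : Amb n) ∈ C.bd),
        φ x = (⟨(x : ↥C.carrier), ⟨x.2, hx⟩⟩, ⟨0, ⟨le_rfl, zero_lt_one⟩⟩)

/-- The wild set of a crumpled cube: the points of `Bd C` at which `Bd C` fails to be
locally collared in `C`. -/
def wildSet {n : ℕ} (C : CrumpledCube n) : Set (Amb n) :=
  {p | ∃ hp : p ∈ C.bd, ¬ LocallyCollaredAt C ⟨p, C.bd_subset_carrier hp⟩}

/-- `C` is strictly wilder than `D`. -/
def StrictlyWilder {n : ℕ} (C D : CrumpledCube n) : Prop :=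
  (∃ h : ↥C.bd ≃ₜ ↥D.bd, MemW C D h) ∧ ∀ H : ↥D.bd ≃ₜ ↥C.bd, ¬ MemW D C H

/-- A crumpled `n`-cube is a closed `n`-cell-complement if the complement of its
interior in `S^n` is an `n`-cell. -/
def IsClosedCellComplement {n : ℕ} (C : CrumpledCube n) : Prop :=
  Nonempty (↥(Sph n \ C.int) ≃ₜ ↥(Metric.closedBall (0 : EuclideanSpace ℝ (Fin n)) 1))
/-- `(C_X, h_X)` is a standard flattening of the crumpled cube `C` relative to
`X ⊆ Bd C`. -/
def IsStandardFlattening {n : ℕ} (C : CrumpledCube n) (X : Set (Amb n))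
    (CX : CrumpledCube n) (hX : ↥C.bd ≃ₜ ↥CX.bd) : Prop :=
  MemW C CX hX ∧
  (∀ x : ↥C.bd, (x : Amb n) ∈ X → ((hX x : ↥CX.bd) : Amb n) = (x : Amb n)) ∧
  C.carrier ⊆ CX.carrier ∧
  (∀ (p : Amb n) (hp : p ∈ CX.bd), p ∉ X →
    LocallyCollaredAt CX ⟨p, CX.bd_subset_carrier hp⟩) ∧
  ∃ r : ↥CX.carrier → ↥CX.carrier,
    Continuous r ∧
    (∀ y, ((r y : ↥CX.carrier) : Amb n) ∈ C.carrier) ∧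
    (∀ y : ↥CX.carrier, ((y : ↥CX.carrier) : Amb n) ∈ C.carrier → r y = y) ∧
    (∃ F : C(↥CX.carrier × I, ↥CX.carrier),
      (∀ y, F (y, 0) = y) ∧ (∀ y, F (y, 1) = r y) ∧
      (∀ (y : ↥CX.carrier) (t : I), ((y : ↥CX.carrier) : Amb n) ∈ C.carrier → F (y, t) = y)) ∧
    (∀ (x : ↥C.bd) (hb : ((hX x : ↥CX.bd) : Amb n) ∈ CX.carrier),
      ((r ⟨((hX x : ↥CX.bd) : Amb n), hb⟩ : ↥CX.carrier) : Amb n) = (x : Amb n)) ∧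
    (∀ y : ↥CX.carrier, (∃ y', y' ≠ y ∧ r y' = r y) →
      ((r y : ↥CX.carrier) : Amb n) ∈ C.bd \ X)


/-!
Composing with a map associated with `(C, C_X, h_X)` gives the backward direction. Forward,
if `f` is associated with `(C, D, h)` and `r : C_X → C` is the retraction, then `f ∘ r` agrees
with `h ∘ h_X⁻¹` on `Bd C_X`, and by the fibre condition on `r` it sends `Int C_X` into
`Int D ∪ h(Bd C \ X)`, i.e. away from `W_D`. Outside `W_D` the boundary is locally collared, so
`Bd D` can be pushed into `Int D` along local collars: finitely many pushes handle each compact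
annulus `2⁻¹ ^ (k + 1) ≤ d(·, W_D) ≤ 2⁻¹ ^ k`, with geometrically small displacements, and their
infinite composite is a deformation `G_t` of `D` with `G_0 = id` that for `t > 0` moves every point
outside `W_D` off `Bd D`. Then `y ↦ G_{d(y, Bd C_X)} (f (r y))` is associated with
`(C_X, D, h ∘ h_X⁻¹)`.
-/

open Filter Topology

lemma IsClosed.exists_lipschitzWith_pos_iff_notMem {Z : Type*} [MetricSpace Z] {s : Set Z}
    (hs : IsClosed s) :
    ∃ ζ : Z → ℝ, LipschitzWith 1 ζ ∧ (∀ z, 0 ≤ ζ z ∧ ζ z ≤ 1) ∧ ∀ z, 0 < ζ z ↔ z ∉ s := by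
  rcases s.eq_empty_or_nonempty with rfl | hne
  · exact ⟨fun _ => 1, (LipschitzWith.const 1).weaken zero_le_one, fun _ => by norm_num,
      fun _ => by simp⟩
  · refine ⟨fun z => min (infDist z s) 1, (lipschitz_infDist_pt s).min_const 1,
      fun z => ⟨le_min infDist_nonneg zero_le_one, min_le_right _ _⟩, fun z => ?_⟩
    rw [lt_min_iff, hs.notMem_iff_infDist_pos hne]
    simp



structure BoundaryPush (Z : Type*) [TopologicalSpace Z] (B : Set Z) where
  toFun : ℝ → Z → Z
  continuous_uncurry : Continuous fun q : ℝ × Z => toFun q.1 q.2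
  apply_of_nonpos : ∀ u, u ≤ 0 → ∀ z, toFun u z = z
  mapsTo_compl : ∀ u, MapsTo (toFun u) Bᶜ Bᶜ
  eq_of_mem_of_apply_mem : ∀ u z, z ∈ B → toFun u z ∈ B → toFun u z = z

namespace BoundaryPush

section Topological

variable {Z : Type*} [TopologicalSpace Z] {B : Set Z}

instance : CoeFun (BoundaryPush Z B) (fun _ => ℝ → Z → Z) := ⟨toFun⟩

def support (S : BoundaryPush Z B) : Set Z := {z | ∃ u, S u z ≠ z}

def Expels (S : BoundaryPush Z B) (z : Z) : Prop := ∀ u, 0 < u → S u z ∉ B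

lemma apply_eq_of_notMem_support {S : BoundaryPush Z B} {z : Z} (hz : z ∉ S.support) (u : ℝ) :
    S u z = z := by
  by_contra h
  exact hz ⟨u, h⟩

lemma apply_notMem {S : BoundaryPush Z B} {z : Z} (hz : z ∉ B) (u : ℝ) : S u z ∉ B :=
  S.mapsTo_compl u hz

protected def refl (Z : Type*) [TopologicalSpace Z] (B : Set Z) : BoundaryPush Z B where
  toFun _ z := z
  continuous_uncurry := continuous_snd
  apply_of_nonpos _ _ _ := rfl
  mapsTo_compl _ := mapsTo_id _
  eq_of_mem_of_apply_mem _ _ _ _ := rfl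

protected def trans (S T : BoundaryPush Z B) : BoundaryPush Z B where
  toFun u := T u ∘ S u
  continuous_uncurry :=
    T.continuous_uncurry.comp (continuous_fst.prodMk S.continuous_uncurry)
  apply_of_nonpos u hu z := by
    simp only [Function.comp_apply]
    rw [S.apply_of_nonpos u hu, T.apply_of_nonpos u hu]
  mapsTo_compl u := (T.mapsTo_compl u).comp (S.mapsTo_compl u)
  eq_of_mem_of_apply_mem u z hz hTS := by
    have hS : S u z ∈ B := by_contra fun h => T.apply_notMem h u hTS
    have hSz : S u z = z := S.eq_of_mem_of_apply_mem u z hz hS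
    simp only [Function.comp_apply, hSz] at hTS ⊢
    exact T.eq_of_mem_of_apply_mem u z hz hTS

lemma trans_apply (S T : BoundaryPush Z B) (u : ℝ) (z : Z) : S.trans T u z = T u (S u z) := rfl

lemma support_trans_subset (S T : BoundaryPush Z B) :
    (S.trans T).support ⊆ S.support ∪ T.support := by
  rintro z ⟨u, hu⟩
  by_cases hS : S u z = z
  · rw [trans_apply, hS] at hu
    exact Or.inr ⟨u, hu⟩
  · exact Or.inl ⟨u, hS⟩

lemma Expels.trans_left {S : BoundaryPush Z B} {z : Z} (hS : S.Expels z) (T : BoundaryPush Z B) :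
    (S.trans T).Expels z :=
  fun u hu => T.apply_notMem (hS u hu) u

lemma Expels.trans_right {T : BoundaryPush Z B} {z : Z} (hT : T.Expels z) (S : BoundaryPush Z B) :
    (S.trans T).Expels z := by
  intro u hu
  by_cases hSz : S u z ∈ B
  · have hz : z ∈ B := by_contra fun h => S.apply_notMem h u hSz
    rw [trans_apply, S.eq_of_mem_of_apply_mem u z hz hSz]
    exact hT u hu
  · exact T.apply_notMem hSz u

lemma exists_support_subset_biUnion {ι : Type*} (s : Finset ι) (S : ι → BoundaryPush Z B) :
    ∃ T : BoundaryPush Z B, T.support ⊆ ⋃ i ∈ s, (S i).support ∧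
      ∀ i ∈ s, ∀ z, (S i).Expels z → T.Expels z := by
  classical
  induction s using Finset.induction_on with
  | empty => exact ⟨BoundaryPush.refl Z B, fun _ ⟨_, hu⟩ => (hu rfl).elim, by simp⟩
  | insert i s _ ih =>
    obtain ⟨T, hT, hTE⟩ := ih
    refine ⟨(S i).trans T, (support_trans_subset _ _).trans ?_, ?_⟩
    · rw [Finset.set_biUnion_insert]
      exact union_subset_union_right _ hT
    · intro j hj z hz
      rcases Finset.mem_insert.mp hj with rfl | hj
      · exact hz.trans_left T
      · exact (hTE j hj z hz).trans_right _

end Topological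

variable {Z : Type*} [MetricSpace Z] {B : Set Z}

lemma exists_forall_dist_le [CompactSpace Z] (S : BoundaryPush Z B) {ε : ℝ} (hε : 0 < ε) :
    ∃ c > 0, ∀ u ≤ c, ∀ z, dist (S u z) z ≤ ε := by
  have hnear : ∀ᶠ u in 𝓝 (0 : ℝ), ∀ z ∈ (univ : Set Z), dist (S u z) z < ε := by
    refine isCompact_univ.eventually_forall_of_forall_eventually fun z _ => ?_
    have hcont : Continuous fun q : ℝ × Z => dist (S q.1 q.2) q.2 :=
      S.continuous_uncurry.dist continuous_snd
    have h0 : dist (S 0 z) z < ε := by rwa [S.apply_of_nonpos 0 le_rfl, dist_self]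
    exact hcont.continuousAt.eventually (gt_mem_nhds h0)
  obtain ⟨δ, hδ, hball⟩ := Metric.eventually_nhds_iff.mp hnear
  refine ⟨δ / 2, half_pos hδ, fun u hu z => ?_⟩
  rcases le_or_gt u 0 with hu0 | hu0
  · rw [S.apply_of_nonpos u hu0, dist_self]
    exact hε.le
  · refine (hball ?_ z (mem_univ z)).le
    rw [Real.dist_0_eq_abs, abs_of_pos hu0]
    linarith


def partialComp (S : ℕ → BoundaryPush Z B) (c : ℕ → ℝ) (t : ℝ) : ℕ → Z → Z
  | 0 => id
  | k + 1 => S k (min (c k) t) ∘ partialComp S c t k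

section PartialComp

variable (S : ℕ → BoundaryPush Z B) (c : ℕ → ℝ)

lemma partialComp_succ (t : ℝ) (k : ℕ) (z : Z) :
    partialComp S c t (k + 1) z = S k (min (c k) t) (partialComp S c t k z) := rfl

lemma continuous_partialComp (k : ℕ) :
    Continuous fun q : ℝ × Z => partialComp S c q.1 k q.2 := by
  induction k with
  | zero => exact continuous_snd
  | succ k ih =>
    exact (S k).continuous_uncurry.comp ((continuous_const.min continuous_fst).prodMk ih)

lemma partialComp_zero_left (k : ℕ) (z : Z) : partialComp S c 0 k z = z := by
  induction k with
  | zero => rfl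
  | succ k ih => rw [partialComp_succ, ih, (S k).apply_of_nonpos _ (min_le_right _ _)]

lemma partialComp_notMem_of_le {t : ℝ} {z : Z} {j k : ℕ} (hjk : j ≤ k)
    (hj : partialComp S c t j z ∉ B) : partialComp S c t k z ∉ B := by
  induction k, hjk using Nat.le_induction with
  | base => exact hj
  | succ k _ ih => exact (S k).apply_notMem ih _

lemma partialComp_eq_self_of_mem {t : ℝ} {z : Z} (hz : z ∈ B) {k : ℕ}
    (hk : partialComp S c t k z ∈ B) : partialComp S c t k z = z := by
  induction k with
  | zero => rfl
  | succ k ih =>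
    have hk' : partialComp S c t k z ∈ B :=
      by_contra fun h => partialComp_notMem_of_le S c k.le_succ h hk
    rw [partialComp_succ, ih hk'] at hk ⊢
    exact (S k).eq_of_mem_of_apply_mem _ z hz hk

lemma partialComp_succ_notMem_of_expels {t : ℝ} (ht : 0 < t) {j : ℕ} (hc : 0 < c j) {z : Z}
    (hz : (S j).Expels z) : partialComp S c t (j + 1) z ∉ B := by
  by_cases hzB : z ∈ B
  · by_cases hj : partialComp S c t j z ∈ B
    · rw [partialComp_succ, partialComp_eq_self_of_mem S c hzB hj]
      exact hz _ (lt_min hc ht)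
    · exact partialComp_notMem_of_le S c j.le_succ hj
  · exact partialComp_notMem_of_le S c (Nat.zero_le _) hzB

variable {S c} {ζ : Z → ℝ}
  (hdisp : ∀ k u, u ≤ c k → ∀ z, dist (S k u z) z ≤ 4⁻¹ * 2⁻¹ ^ k * ζ z)
include hdisp

lemma dist_partialComp_succ_le (hζ : ∀ z, ζ z ≤ 1) (t : ℝ) (k : ℕ) (z : Z) :
    dist (partialComp S c t k z) (partialComp S c t (k + 1) z) ≤ 4⁻¹ * 2⁻¹ ^ k := by
  rw [dist_comm, partialComp_succ]
  calc _ ≤ 4⁻¹ * 2⁻¹ ^ k * ζ (partialComp S c t k z) := hdisp k _ (min_le_left _ _) _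
    _ ≤ 4⁻¹ * 2⁻¹ ^ k := mul_le_of_le_one_right (by positivity) (hζ _)

/-- Since `ζ` is `1`-Lipschitz, step `k` multiplies `ζ` by at least `1 - 4⁻¹ * 2⁻¹ ^ k`, and these
factors have product at least `1 / 2`. -/
lemma half_le_partialComp (hζ : LipschitzWith 1 ζ) (t : ℝ) {z : Z} (hz : 0 < ζ z) (k : ℕ) :
    ζ z / 2 ≤ ζ (partialComp S c t k z) := by
  suffices h : ∀ k, ζ z * (2⁻¹ + 2⁻¹ * 2⁻¹ ^ k) ≤ ζ (partialComp S c t k z) by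
    nlinarith [h k, pow_pos (by norm_num : (0 : ℝ) < 2⁻¹) k]
  intro k
  induction k with
  | zero => norm_num [partialComp]
  | succ k ih =>
    set w := partialComp S c t k z
    have hstep : ζ w - ζ (partialComp S c t (k + 1) z) ≤ 4⁻¹ * 2⁻¹ ^ k * ζ w := by
      calc _ ≤ dist w (partialComp S c t (k + 1) z) := by
            have := hζ.dist_le_mul w (partialComp S c t (k + 1) z)
            rw [Real.dist_eq, NNReal.coe_one, one_mul] at this
            exact (le_abs_self _).trans this
        _ ≤ _ := by
            rw [dist_comm, partialComp_succ]; exact hdisp k _ (min_le_left _ _) w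
    have hx0 : (0 : ℝ) < 2⁻¹ ^ k := by positivity
    have hx1 : (2⁻¹ : ℝ) ^ k ≤ 1 := pow_le_one₀ (by norm_num) (by norm_num)
    rw [pow_succ]
    nlinarith [mul_le_mul_of_nonneg_right ih (by linarith : (0 : ℝ) ≤ 1 - 4⁻¹ * 2⁻¹ ^ k),
      mul_nonneg (mul_nonneg hz.le hx0.le) (sub_nonneg.mpr hx1)]

lemma exists_partialComp_eq_of_le (hζ : LipschitzWith 1 ζ)
    (hsupp : ∀ k, ∀ z ∈ (S k).support, ζ z ≤ 2 * 2⁻¹ ^ k)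
    (t : ℝ) {z : Z} (hz : 0 < ζ z) :
    ∃ K, ∀ k ≥ K, partialComp S c t k z = partialComp S c t K z := by
  obtain ⟨K, hK⟩ := exists_pow_lt_of_lt_one (by positivity : 0 < ζ z / 4)
    (by norm_num : (2⁻¹ : ℝ) < 1)
  have hfix : ∀ k ≥ K, partialComp S c t (k + 1) z = partialComp S c t k z := by
    intro k hk
    refine apply_eq_of_notMem_support (fun hmem => ?_) _
    have hpow : (2⁻¹ : ℝ) ^ k ≤ 2⁻¹ ^ K := pow_le_pow_of_le_one (by norm_num) (by norm_num) hk
    linarith [hsupp k _ hmem, half_le_partialComp hdisp hζ t hz k]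
  refine ⟨K, fun k hk => ?_⟩
  induction k, hk using Nat.le_induction with
  | base => rfl
  | succ k hk ih => rw [hfix k hk, ih]

theorem exists_continuous_limit_partialComp [CompleteSpace Z] (hζ : LipschitzWith 1 ζ)
    (hζ1 : ∀ z, ζ z ≤ 1)
    (hc : ∀ k, 0 < c k) (hsupp : ∀ k, ∀ z ∈ (S k).support, ζ z ≤ 2 * 2⁻¹ ^ k)
    (hcover : ∀ z ∈ B, 0 < ζ z → ∃ k, (S k).Expels z) :
    ∃ G : ℝ × Z → Z, Continuous G ∧ (∀ z, G (0, z) = z) ∧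
      ∀ t > 0, ∀ z, 0 < ζ z → G (t, z) ∉ B := by
  have hstep := dist_partialComp_succ_le hdisp hζ1
  choose G hG using fun q : ℝ × Z => cauchySeq_tendsto_of_complete
    (cauchySeq_of_le_geometric 2⁻¹ 4⁻¹ (by norm_num) (hstep q.1 · q.2))
  have hunif : TendstoUniformly (fun k (q : ℝ × Z) => partialComp S c q.1 k q.2) G atTop := by
    refine Metric.tendstoUniformly_iff.mpr fun ε hε => ?_
    obtain ⟨K, hK⟩ := exists_pow_lt_of_lt_one (by positivity : 0 < 2 * ε)
      (by norm_num : (2⁻¹ : ℝ) < 1)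
    filter_upwards [eventually_ge_atTop K] with k hk q
    have hbound := dist_le_of_le_geometric_of_tendsto 2⁻¹ 4⁻¹ (by norm_num)
      (hstep q.1 · q.2) (hG q) k
    have hpow : (2⁻¹ : ℝ) ^ k ≤ 2⁻¹ ^ K := pow_le_pow_of_le_one (by norm_num) (by norm_num) hk
    have hsum : (4⁻¹ : ℝ) * 2⁻¹ ^ k / (1 - 2⁻¹) = 2⁻¹ * 2⁻¹ ^ k := by ring
    rw [dist_comm]
    linarith
  refine ⟨G, hunif.continuous (Eventually.of_forall (continuous_partialComp S c)).frequently,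
    fun z => tendsto_nhds_unique (hG (0, z)) ?_, fun t ht z hz => ?_⟩
  · simp only [partialComp_zero_left, tendsto_const_nhds]
  obtain ⟨K, hK⟩ := exists_partialComp_eq_of_le hdisp hζ hsupp t hz
  have hGK : ∀ k ≥ K, G (t, z) = partialComp S c t k z := fun k hk =>
    tendsto_nhds_unique (hG (t, z)) (tendsto_atTop_of_eventually_const hK) |>.trans (hK k hk).symm
  by_cases hzB : z ∈ B
  · obtain ⟨j, hj⟩ := hcover z hzB hz
    rw [hGK (max K (j + 1)) (le_max_left _ _)]
    exact partialComp_notMem_of_le S c (le_max_right _ _)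
      (partialComp_succ_notMem_of_expels S c ht (hc j) hj)
  · rw [hGK K le_rfl]
    exact partialComp_notMem_of_le S c (Nat.zero_le K) hzB

end PartialComp

section Stages

variable [CompactSpace Z] {ζ : Z → ℝ}

/-- Finitely many pushes supported in balls of radius `4⁻¹ * 2⁻¹ ^ k` cover the compact annulus;
that radius gives the bounds on `ζ` over the support. -/
lemma exists_stage (hB : IsClosed B) (hζ : LipschitzWith 1 ζ)
    (H : ∀ p ∈ B, 0 < ζ p → ∀ ρ > 0, ∃ S : BoundaryPush Z B,
      S.support ⊆ ball p ρ ∧ ∀ᶠ z in 𝓝 p, S.Expels z) (k : ℕ) :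
    ∃ T : BoundaryPush Z B, (∀ z ∈ T.support, 4⁻¹ * 2⁻¹ ^ k ≤ ζ z ∧ ζ z ≤ 2 * 2⁻¹ ^ k) ∧
      ∀ z ∈ B, 2⁻¹ ^ (k + 1) ≤ ζ z → ζ z ≤ 2⁻¹ ^ k → T.Expels z := by
  set A := B ∩ {z | 2⁻¹ ^ (k + 1) ≤ ζ z ∧ ζ z ≤ 2⁻¹ ^ k}
  have hA : IsCompact A := (hB.inter ((isClosed_le continuous_const hζ.continuous).inter
    (isClosed_le hζ.continuous continuous_const))).isCompact
  have hpush : ∀ p ∈ A, ∃ S : BoundaryPush Z B,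
      S.support ⊆ ball p (4⁻¹ * 2⁻¹ ^ k) ∧ ∀ᶠ z in 𝓝 p, S.Expels z :=
    fun p hp => H p hp.1 (lt_of_lt_of_le (by positivity) hp.2.1) _ (by positivity)
  choose P hPsupp hPexp using hpush
  obtain ⟨t, hAt⟩ := hA.elim_nhds_subcover' (fun p hp => {z | (P p hp).Expels z}) hPexp
  obtain ⟨T, hTsupp, hTexp⟩ := exists_support_subset_biUnion t fun p => P p p.2
  refine ⟨T, fun z hz => ?_, fun z hzB hlo hhi => ?_⟩
  · obtain ⟨p, -, hzp⟩ := mem_iUnion₂.mp (hTsupp hz)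
    have hdist : |ζ z - ζ p| < 4⁻¹ * 2⁻¹ ^ k := by
      have := hζ.dist_le_mul z p
      rw [Real.dist_eq, NNReal.coe_one, one_mul] at this
      exact this.trans_lt (hPsupp p p.2 hzp)
    obtain ⟨hlo, hhi⟩ : 2⁻¹ ^ (k + 1) ≤ ζ p ∧ ζ p ≤ 2⁻¹ ^ k := p.2.2
    rw [pow_succ] at hlo
    constructor <;> linarith [abs_lt.mp hdist]
  · obtain ⟨p, hpt, hzp⟩ := mem_iUnion₂.mp (hAt ⟨hzB, hlo, hhi⟩)
    exact hTexp p hpt z hzp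

theorem exists_push_off_of_forall_exists_push {U : Set Z} (hB : IsClosed B) (hU : IsOpen U)
    (H : ∀ p ∈ B ∩ U, ∀ ρ > 0, ∃ S : BoundaryPush Z B,
      S.support ⊆ ball p ρ ∧ ∀ᶠ z in 𝓝 p, S.Expels z) :
    ∃ G : ℝ × Z → Z, Continuous G ∧ (∀ z, G (0, z) = z) ∧ ∀ t > 0, ∀ z ∈ U, G (t, z) ∉ B := by
  obtain ⟨ζ, hζ, hζ01, hζpos⟩ := hU.isClosed_compl.exists_lipschitzWith_pos_iff_notMem
  simp only [notMem_compl_iff] at hζpos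
  choose S hSsupp hSexp using
    exists_stage hB hζ fun p hp hζp => H p ⟨hp, (hζpos p).mp hζp⟩
  have hdisp : ∀ k, ∃ c > 0, ∀ u ≤ c, ∀ z, dist (S k u z) z ≤ 4⁻¹ * 2⁻¹ ^ k * ζ z := by
    intro k
    obtain ⟨c, hc, hcd⟩ := (S k).exists_forall_dist_le
      (ε := 4⁻¹ * 2⁻¹ ^ k * (4⁻¹ * 2⁻¹ ^ k)) (by positivity)
    refine ⟨c, hc, fun u hu z => ?_⟩
    by_cases hz : z ∈ (S k).support
    · exact (hcd u hu z).trans (mul_le_mul_of_nonneg_left (hSsupp k z hz).1 (by positivity))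
    · rw [apply_eq_of_notMem_support hz, dist_self]
      exact mul_nonneg (by positivity) (hζ01 z).1
  choose c hc hcd using hdisp
  have hcover : ∀ z ∈ B, 0 < ζ z → ∃ k, (S k).Expels z := fun z hzB hz =>
    (exists_nat_pow_near_of_lt_one hz (hζ01 z).2 (by norm_num) (by norm_num : (2⁻¹ : ℝ) < 1)).imp
      fun k hk => hSexp k z hzB hk.1.le hk.2
  obtain ⟨G, hGc, hG0, hGoff⟩ := exists_continuous_limit_partialComp hcd hζ
    (fun z => (hζ01 z).2) hc (fun k z hz => (hSsupp k z hz).2) hcover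
  exact ⟨G, hGc, hG0, fun t ht z hz => hGoff t ht z ((hζpos z).mpr hz)⟩

end Stages

end BoundaryPush

section Collar

variable {Z : Type*} [MetricSpace Z] {B N : Set Z} (φ : N ≃ₜ ↥(N ∩ B) × Ico (0 : ℝ) 1)

def collarRaise (a : ℝ) (ν : N) : N :=
  φ.symm ((φ ν).1, ⟨max (φ ν).2 (min 2⁻¹ a),
    le_max_of_le_left (φ ν).2.2.1, max_lt (φ ν).2.2.2 ((min_le_left _ _).trans_lt (by norm_num))⟩)

lemma continuous_collarRaise : Continuous fun q : ℝ × N => collarRaise φ q.1 q.2 := by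
  refine φ.symm.continuous.comp ((φ.continuous.comp continuous_snd).fst.prodMk ?_)
  exact (continuous_subtype_val.comp (φ.continuous.comp continuous_snd).snd).max
    (continuous_const.min continuous_fst) |>.subtype_mk _

lemma collarRaise_of_nonpos {a : ℝ} (ha : a ≤ 0) (ν : N) : collarRaise φ a ν = ν := by
  have hmax : max ((φ ν).2 : ℝ) (min 2⁻¹ a) = (φ ν).2 :=
    max_eq_left ((min_le_right _ _).trans (ha.trans (φ ν).2.2.1))
  simp only [collarRaise, hmax, Subtype.coe_eta, Prod.mk.eta, Homeomorph.symm_apply_apply]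

open Classical in
def collarPush (Λ : Z → ℝ) (u : ℝ) (z : Z) : Z :=
  if h : z ∈ N then collarRaise φ (u * Λ z) ⟨z, h⟩ else z

variable {φ} {Λ : Z → ℝ} {u : ℝ} {z : Z}

lemma collarPush_of_mem (h : z ∈ N) :
    collarPush φ Λ u z = collarRaise φ (u * Λ z) ⟨z, h⟩ := dif_pos h

lemma collarPush_of_notMem (h : z ∉ N) : collarPush φ Λ u z = z := dif_neg h

lemma collarPush_of_mul_nonpos (h : u * Λ z ≤ 0) : collarPush φ Λ u z = z := by
  by_cases hz : z ∈ N
  · rw [collarPush_of_mem hz, collarRaise_of_nonpos φ h]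
  · exact collarPush_of_notMem hz

lemma continuous_collarPush (hN : IsOpen N) (hΛ : Continuous Λ) (hΛN : tsupport Λ ⊆ N) :
    Continuous fun q : ℝ × Z => collarPush φ Λ q.1 q.2 := by
  have hon : ContinuousOn (fun q : ℝ × Z => collarPush φ Λ q.1 q.2) (univ ×ˢ N) := by
    rw [continuousOn_iff_continuous_domRestrict]
    have hrestr : (univ ×ˢ N).domRestrict (fun q : ℝ × Z => collarPush φ Λ q.1 q.2) =
        fun q : ↥(univ ×ˢ N) => (collarRaise φ (q.1.1 * Λ q.1.2) ⟨q.1.2, q.2.2⟩ : Z) := by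
      funext q
      exact collarPush_of_mem q.2.2
    rw [hrestr]
    refine continuous_subtype_val.comp ((continuous_collarRaise φ).comp
      (f := fun q : ↥(univ ×ˢ N) => (q.1.1 * Λ q.1.2, (⟨q.1.2, q.2.2⟩ : N))) ?_)
    exact ((continuous_fst.mul (hΛ.comp continuous_snd)).comp continuous_subtype_val).prodMk
      ((continuous_snd.comp continuous_subtype_val).subtype_mk _)
  have hoff : ContinuousOn (fun q : ℝ × Z => collarPush φ Λ q.1 q.2) (univ ×ˢ (tsupport Λ)ᶜ) :=
    continuous_snd.continuousOn.congr fun q hq => collarPush_of_mul_nonpos <| by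
      rw [image_eq_zero_of_notMem_tsupport hq.2, mul_zero]
  have hcover : univ ×ˢ N ∪ univ ×ˢ (tsupport Λ)ᶜ = (univ : Set (ℝ × Z)) := by
    rw [← prod_union, compl_subset_iff_union.mp (compl_subset_compl.mpr hΛN), univ_prod_univ]
  rw [← continuousOn_univ, ← hcover]
  exact hon.union_of_isOpen hoff (isOpen_univ.prod hN)
    (isOpen_univ.prod (isClosed_tsupport Λ).isOpen_compl)

variable (hφ : ∀ (x : N) (hx : (x : Z) ∈ B), φ x = (⟨x, x.2, hx⟩, ⟨0, le_rfl, zero_lt_one⟩))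
include hφ

lemma mem_iff_collar_height_eq_zero (ν : N) : (ν : Z) ∈ B ↔ ((φ ν).2 : ℝ) = 0 := by
  refine ⟨fun hν => by rw [hφ ν hν], fun h0 => ?_⟩
  have hb : φ ⟨(φ ν).1, (φ ν).1.2.1⟩ = φ ν := by
    rw [hφ _ (φ ν).1.2.2]
    ext
    · rfl
    · exact h0.symm
  rw [← φ.injective hb]
  exact (φ ν).1.2.2

lemma collarPush_mem_iff (h : z ∈ N) :
    collarPush φ Λ u z ∈ B ↔ max ((φ ⟨z, h⟩).2 : ℝ) (min 2⁻¹ (u * Λ z)) = 0 := by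
  rw [collarPush_of_mem h, mem_iff_collar_height_eq_zero hφ, collarRaise,
    Homeomorph.apply_symm_apply]

lemma exists_boundaryPush_of_collar (hN : IsOpen N) (hΛ : Continuous Λ)
    (hΛ0 : ∀ z, 0 ≤ Λ z) (hΛN : tsupport Λ ⊆ N) :
    ∃ S : BoundaryPush Z B, S.support ⊆ Function.support Λ ∧ ∀ z, 0 < Λ z → S.Expels z := by
  have hheight : ∀ z (h : z ∈ N), 0 ≤ ((φ ⟨z, h⟩).2 : ℝ) := fun z h => (φ ⟨z, h⟩).2.2.1
  refine ⟨⟨collarPush φ Λ, continuous_collarPush hN hΛ hΛN,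
    fun u hu z => collarPush_of_mul_nonpos (mul_nonpos_of_nonpos_of_nonneg hu (hΛ0 z)),
    fun u z hz => ?_, fun u z hz hPz => ?_⟩, fun z hz hΛz => ?_, fun z hΛz u hu => ?_⟩
  · by_cases h : z ∈ N
    · have hs : ((φ ⟨z, h⟩).2 : ℝ) ≠ 0 := fun h0 =>
        hz ((mem_iff_collar_height_eq_zero hφ ⟨z, h⟩).mpr h0)
      change collarPush φ Λ u z ∉ B
      rw [collarPush_mem_iff hφ h]
      exact ((hheight z h).lt_of_ne hs.symm |>.trans_le (le_max_left _ _)).ne'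
    · rwa [mem_compl_iff, collarPush_of_notMem h]
  · by_cases h : z ∈ N
    · have hs : ((φ ⟨z, h⟩).2 : ℝ) = 0 := (mem_iff_collar_height_eq_zero hφ ⟨z, h⟩).mp hz
      rw [collarPush_mem_iff hφ h, hs] at hPz
      refine collarPush_of_mul_nonpos (not_lt.mp fun hpos => ?_)
      linarith [le_max_right 0 (min (2⁻¹ : ℝ) (u * Λ z)), lt_min (by norm_num : (0 : ℝ) < 2⁻¹) hpos]
    · exact collarPush_of_notMem h
  · obtain ⟨u, hu⟩ := hz
    exact hu (collarPush_of_mul_nonpos (by rw [hΛz, mul_zero]))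
  · have h : z ∈ N := hΛN (subset_tsupport Λ hΛz.ne')
    change collarPush φ Λ u z ∉ B
    rw [collarPush_mem_iff hφ h]
    have : 0 < min (2⁻¹ : ℝ) (u * Λ z) := lt_min (by norm_num) (mul_pos hu hΛz)
    exact (this.trans_le (le_max_right _ _)).ne'

end Collar

lemma exists_boundaryPush_near_of_collar {Z : Type*} [MetricSpace Z] {B N : Set Z}
    {φ : N ≃ₜ ↥(N ∩ B) × Ico (0 : ℝ) 1}
    (hφ : ∀ (x : N) (hx : (x : Z) ∈ B), φ x = (⟨x, x.2, hx⟩, ⟨0, le_rfl, zero_lt_one⟩))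
    (hN : IsOpen N) {p : Z} (hp : p ∈ N) {ρ : ℝ} (hρ : 0 < ρ) :
    ∃ S : BoundaryPush Z B, S.support ⊆ ball p ρ ∧ ∀ᶠ z in 𝓝 p, S.Expels z := by
  obtain ⟨ρ₁, hρ₁, hball⟩ := Metric.isOpen_iff.mp hN p hp
  set r := min ρ (ρ₁ / 2)
  have hr : 0 < r := lt_min hρ (half_pos hρ₁)
  set Λ : Z → ℝ := fun z => max 0 (1 - dist z p / r)
  have hΛpos : ∀ z, 0 < Λ z ↔ z ∈ ball p r := fun z => by
    rw [lt_max_iff, mem_ball, sub_pos, div_lt_one hr]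
    simp
  have hsupp : Function.support Λ ⊆ ball p r := fun z hz =>
    (hΛpos z).mp (lt_of_le_of_ne (le_max_left _ _) (Ne.symm hz))
  have htsupp : tsupport Λ ⊆ N := by
    refine (closure_minimal (hsupp.trans ball_subset_closedBall) isClosed_closedBall).trans ?_
    exact (closedBall_subset_ball (by linarith [min_le_right ρ (ρ₁ / 2)])).trans hball
  obtain ⟨S, hSsupp, hSexp⟩ := exists_boundaryPush_of_collar hφ hN (Λ := Λ) (by fun_prop)
    (fun _ => le_max_left _ _) htsupp
  refine ⟨S, hSsupp.trans (hsupp.trans (ball_subset_ball (min_le_left _ _))), ?_⟩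
  filter_upwards [ball_mem_nhds p hr] with z hz using hSexp z ((hΛpos z).mpr hz)

namespace CrumpledCube

variable {n : ℕ} (C : CrumpledCube n)

lemma isCompact_bd : IsCompact C.bd := by
  obtain ⟨e, he, -, hrange⟩ := C.exists_embedding
  have : CompactSpace ↥(Sph (n - 1)) := isCompact_iff_compactSpace.mp (isCompact_sphere _ _)
  exact hrange ▸ isCompact_range he

lemma bd_nonempty : C.bd.Nonempty := by
  obtain ⟨e, -, -, hrange⟩ := C.exists_embedding
  have : Nonempty ↥(Sph (n - 1)) :=
    (NormedSpace.sphere_nonempty (x := (0 : Amb (n - 1))).mpr zero_le_one).to_subtype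
  exact hrange ▸ range_nonempty e

lemma int_subset : C.int ⊆ Sph n \ C.bd := by
  obtain ⟨x, -, hint⟩ := C.int_component
  exact hint ▸ connectedComponentIn_subset _ _

lemma isClosed_carrier : IsClosed C.carrier := by
  obtain ⟨x, hx, hint⟩ := C.int_component
  refine isClosed_of_closure_subset fun z hz => ?_
  rw [carrier, closure_union, C.isCompact_bd.isClosed.closure_eq] at hz
  by_cases hzb : z ∈ C.bd
  · exact Or.inl hzb
  refine Or.inr ?_
  have hz : z ∈ closure C.int := hz.resolve_left hzb
  have hzS : z ∈ Sph n := closure_minimal (fun y hy => (C.int_subset hy).1) isClosed_sphere hz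
  rw [hint] at hz ⊢
  exact (isPreconnected_connectedComponentIn.subset_closure (subset_insert z _)
    (insert_subset hz subset_closure)).subset_connectedComponentIn
    (mem_insert_of_mem z (mem_connectedComponentIn hx))
    (insert_subset (mem_sdiff_of_mem hzS hzb) (connectedComponentIn_subset _ _)) (mem_insert z _)

instance : CompactSpace C.carrier :=
  isCompact_iff_compactSpace.mp <|
    (isCompact_sphere (0 : Amb n) 1).of_isClosed_subset C.isClosed_carrier <| union_subset
      C.bd_subset_sphere fun _ hy => (C.int_subset hy).1

lemma mem_wildSet_iff (z : C.carrier) :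
    (z : Amb n) ∈ wildSet C ↔ (z : Amb n) ∈ C.bd ∧ ¬ LocallyCollaredAt C z :=
  ⟨fun ⟨hz, h⟩ => ⟨hz, h⟩, fun ⟨hz, h⟩ => ⟨hz, h⟩⟩

lemma isOpen_setOf_notMem_wildSet : IsOpen {z : C.carrier | (z : Amb n) ∉ wildSet C} := by
  have hcoll : IsOpen {z : C.carrier | LocallyCollaredAt C z} := by
    refine isOpen_iff_forall_mem_open.mpr ?_
    rintro z ⟨N, hN, hzN, φ, hφ⟩
    exact ⟨N, fun w hw => ⟨N, hN, hw, φ, hφ⟩, hN, hzN⟩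
  have hset : {z : C.carrier | (z : Amb n) ∉ wildSet C} =
      {z : C.carrier | (z : Amb n) ∈ C.bd}ᶜ ∪ {z : C.carrier | LocallyCollaredAt C z} := by
    ext z
    simp only [mem_wildSet_iff, mem_ofPred_eq, mem_union, mem_compl_iff]
    tauto
  rw [hset]
  exact (C.isCompact_bd.isClosed.preimage continuous_subtype_val).isOpen_compl.union hcoll

theorem exists_push_off_bd (D : CrumpledCube n) :
    ∃ G : ℝ × D.carrier → D.carrier, Continuous G ∧ (∀ z, G (0, z) = z) ∧
      ∀ t > 0, ∀ z : D.carrier, (z : Amb n) ∉ wildSet D → (G (t, z) : Amb n) ∉ D.bd := by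
  refine BoundaryPush.exists_push_off_of_forall_exists_push
    (D.isCompact_bd.isClosed.preimage continuous_subtype_val) D.isOpen_setOf_notMem_wildSet ?_
  rintro p ⟨hpB, hpW⟩ ρ hρ
  have hcoll : LocallyCollaredAt D p := by_contra fun h => hpW ((D.mem_wildSet_iff p).mpr ⟨hpB, h⟩)
  obtain ⟨N, hN, hpN, φ, hφ⟩ := hcoll
  exact exists_boundaryPush_near_of_collar hφ hN hpN hρ

end CrumpledCube

section Maps

variable {n : ℕ}

lemma MemW.trans {C E D : CrumpledCube n} {h₁ : ↥C.bd ≃ₜ ↥E.bd} {h₂ : ↥E.bd ≃ₜ ↥D.bd}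
    (hf : MemW C E h₁) (hg : MemW E D h₂) : MemW C D (h₁.trans h₂) := by
  obtain ⟨f, hfc, hfbd, hfpre⟩ := hf
  obtain ⟨g, hgc, hgbd, hgpre⟩ := hg
  refine ⟨g ∘ f, hgc.comp hfc, fun x hx => ?_, fun x => (hgpre (f x)).trans (hfpre x)⟩
  have hfx : ((f x : E.carrier) : Amb n) ∈ E.bd := (hfpre x).mpr hx
  have hfx' : (⟨f x, hfx⟩ : E.bd) = h₁ ⟨x, hx⟩ := Subtype.ext (hfbd x hx)
  rw [Function.comp_apply, hgbd _ hfx, hfx', Homeomorph.trans_apply]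

lemma MemW.of_continuous_of_notMem_wildSet {C D : CrumpledCube n} {g : ↥C.bd ≃ₜ ↥D.bd}
    (F : C.carrier → D.carrier) (hF : Continuous F)
    (hFbd : ∀ (x : C.carrier) (hx : (x : Amb n) ∈ C.bd), (F x : Amb n) = g ⟨x, hx⟩)
    (hFwild : ∀ x : C.carrier, (x : Amb n) ∉ C.bd → (F x : Amb n) ∉ wildSet D) :
    MemW C D g := by
  obtain ⟨G, hGc, hG0, hGoff⟩ := D.exists_push_off_bd
  have hbd : ∀ (x : C.carrier) (hx : (x : Amb n) ∈ C.bd),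
      (G (infDist (x : Amb n) C.bd, F x) : Amb n) = g ⟨x, hx⟩ := fun x hx => by
    rw [infDist_zero_of_mem hx, hG0, hFbd x hx]
  refine ⟨fun x => G (infDist (x : Amb n) C.bd, F x),
    hGc.comp (((continuous_infDist_pt _).comp continuous_subtype_val).prodMk hF),
    hbd, fun x => ⟨fun hGx => ?_, fun hx => hbd x hx ▸ Subtype.prop _⟩⟩
  by_contra hx
  have hpos : 0 < infDist (x : Amb n) C.bd :=
    (C.isCompact_bd.isClosed.notMem_iff_infDist_pos C.bd_nonempty).mp hx
  exact hGoff _ hpos (F x) (hFwild x hx) hGx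

lemma IsStandardFlattening.exists_retraction {C CX : CrumpledCube n} {X : Set (Amb n)}
    {hX : ↥C.bd ≃ₜ ↥CX.bd} (hsf : IsStandardFlattening C X CX hX) :
    ∃ r : CX.carrier → C.carrier, Continuous r ∧
      (∀ (y : CX.carrier) (hy : (y : Amb n) ∈ CX.bd), (r y : Amb n) = hX.symm ⟨y, hy⟩) ∧
      ∀ y : CX.carrier, (y : Amb n) ∉ CX.bd → (r y : Amb n) ∈ C.bd → (r y : Amb n) ∉ X := by
  obtain ⟨-, -, -, -, r, hrc, hrmem, hrfix, -, hrbd, hrfib⟩ := hsf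
  have hrbd' : ∀ x : C.bd, (r ⟨hX x, CX.bd_subset_carrier (hX x).2⟩ : Amb n) = x :=
    fun x => hrbd x _
  refine ⟨fun y => ⟨r y, hrmem y⟩, (continuous_subtype_val.comp hrc).subtype_mk _,
    fun y hy => ?_, fun y hy hry => ?_⟩
  · simpa using hrbd' (hX.symm ⟨y, hy⟩)
  -- `r y` has a second preimage: `r y` itself if it differs from `y`, else `hX (r y) ∈ Bd C_X`.
  refine (hrfib y ?_).2
  by_cases hfix : r y = y
  · have hyC : (y : Amb n) ∈ C.bd := by
      change (r y : Amb n) ∈ C.bd at hry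
      rwa [hfix] at hry
    refine ⟨⟨hX ⟨y, hyC⟩, CX.bd_subset_carrier (hX ⟨y, hyC⟩).2⟩, fun h => hy ?_, ?_⟩
    · rw [← h]
      exact (hX ⟨y, hyC⟩).2
    · rw [hfix]
      exact Subtype.ext (hrbd' ⟨y, hyC⟩)
  · exact ⟨r y, hfix, hrfix (r y) (hrmem y)⟩

end Maps

theorem stmt11_general (n : ℕ) (C D : CrumpledCube n) (h : ↥C.bd ≃ₜ ↥D.bd)
    (X : Set (Amb n))
    (hXdef : X = {x : Amb n | ∃ hx : x ∈ C.bd, ((h ⟨x, hx⟩ : ↥D.bd) : Amb n) ∈ wildSet D})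
    (CX : CrumpledCube n) (hX : ↥C.bd ≃ₜ ↥CX.bd)
    (hsf : IsStandardFlattening C X CX hX) :
    MemW C D h ↔ MemW CX D (hX.symm.trans h) := by
  refine ⟨fun hf => ?_, fun hg => ?_⟩
  · obtain ⟨f, hfc, hfbd, hfpre⟩ := hf
    obtain ⟨r, hrc, hrbd, hrX⟩ := hsf.exists_retraction
    have hbd : ∀ (y : CX.carrier) (hy : (y : Amb n) ∈ CX.bd), (r y : Amb n) ∈ C.bd := fun y hy => by
      rw [hrbd y hy]
      exact Subtype.prop _
    refine MemW.of_continuous_of_notMem_wildSet (f ∘ r) (hfc.comp hrc) (fun y hy => ?_)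
      fun y hy hwild => ?_
    · rw [Function.comp_apply, hfbd _ (hbd y hy), Homeomorph.trans_apply]
      congr 2
      exact Subtype.ext (hrbd y hy)
    · have hry : (r y : Amb n) ∈ C.bd := (hfpre (r y)).mp hwild.1
      refine hrX y hy hry (hXdef ▸ ⟨hry, ?_⟩)
      rwa [← hfbd _ hry]
  · convert hsf.1.trans hg using 1
    ext x
    simp

/-- **Theorem 5.1.** Let `h : Bd C → Bd D` be a homeomorphism with `W_D ⊆ h(W_C)`, set
`X = h⁻¹(W_D)`, and let `(C_X, h_X)` be a standard flattening of `C` relative to `X`.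
Then `(C,D,h) ∈ 𝒲_n` iff `(C_X, D, h ∘ h_X⁻¹) ∈ 𝒲_n`. -/
theorem stmt11 (n : ℕ) (hn : 2 ≤ n) (C D : CrumpledCube n) (h : ↥C.bd ≃ₜ ↥D.bd)
    (hWD : wildSet D ⊆ bdImage h (wildSet C))
    (X : Set (Amb n))
    (hXdef : X = {x : Amb n | ∃ hx : x ∈ C.bd, ((h ⟨x, hx⟩ : ↥D.bd) : Amb n) ∈ wildSet D})
    (CX : CrumpledCube n) (hX : ↥C.bd ≃ₜ ↥CX.bd)
    (hsf : IsStandardFlattening C X CX hX) :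
    MemW C D h ↔ MemW CX D (hX.symm.trans h) :=
  stmt11_general n C D h X hXdef CX hX hsf
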